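/- arXiv:1205.0780 — 2 statements merged into one kernel-verified Lean document; each statement's English description precedes it below -/
import Mathlib

section
/- Let μ > 0 and let f : ℝ × [0,1] → ℝ be smooth and time-periodic. Then there exists M ≥ 0 such that for every λ ∈ [0,1] and every smooth time-periodic u : ℝ × [0,1] → ℝ with u(t,0) = u(t,1) = 0 for all t solving ∂_t u + λ u ∂_x u − μ ∂²_x u = f on ℝ × [0,1], one has ∫_Q u² + ∫_Q (∂_x u)² + Σ_{k∈ℤ} |k| ∫₀¹ |u_k(x)|² dx ≤ M, where u_k(x) = ∫₀¹ u(t,x) e^{−2πikt} dt. -/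
/-!
Everything comes from testing the equation and integrating by parts in `x` against the
Dirichlet conditions.

* Testing with `u`: since `∫ u² u_x = 0` and `∫ u u_xx = -∫ u_x²`, the energy `E(t) = ∫ u(t)²`
  satisfies `E' = 2 ∫ f u - 2μ ∫ u_x²`. Over one period `E` returns to its value, so
  `μ ∫_Q u_x² = ∫_Q f u`, and AM-GM with Poincaré `∫ u² ≤ ∫ u_x²` gives `∫_Q u_x² ≤ ∫_Q f² / μ²`.
* The same identity gives `E' ≤ ∫ f² + E`; started at a time where `E` is at most its mean, this
  bounds `sup_t E`, hence `∫_Q u⁴ ≤ sup_t E · ∫_Q u_x²` because `u² ≤ ∫ u_x²` pointwise.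
* Testing the `k`-th time-Fourier coefficient of the equation with `conj u_k` and writing
  `u u_x = (u²)_x / 2` gives
  `2πik ∫ |u_k|² = ∫ f_k conj u_k + (λ/2) ∫ (u²)_k conj (u_x)_k - μ ∫ |(u_x)_k|²`.
  Taking norms and summing over `k` with Bessel's inequality bounds `Σ |k| ∫ |u_k|²` in terms of
  `∫_Q f²`, `∫_Q u²`, `∫_Q u⁴` and `∫_Q u_x²`.
-/

open MeasureTheory

/-- The `k`-th time-Fourier coefficient `u_k (x) = ∫₀¹ u (t, x) e^{-2πikt} dt`. -/
noncomputable def timeFourierCoeff (u : ℝ → ℝ → ℝ) (k : ℤ) (x : ℝ) : ℂ :=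
  ∫ t in (0:ℝ)..1, (u t x : ℂ) * Complex.exp (-2 * Real.pi * Complex.I * k * t)

open Set Function ComplexConjugate Complex
open scoped Real

section Calculus

theorem sq_intervalIntegral_le {g : ℝ → ℝ} {a b : ℝ} (hab : a ≤ b)
    (hg : ContinuousOn g (Icc a b)) :
    (∫ x in a..b, g x) ^ 2 ≤ (b - a) * ∫ x in a..b, g x ^ 2 := by
  rcases hab.eq_or_lt with rfl | hlt
  · simp
  set I := ∫ x in a..b, g x
  have hg1 := hg.intervalIntegrable_of_Icc (μ := volume) hab
  have hg2 : IntervalIntegrable (fun x => g x ^ 2) volume a b :=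
    (hg.pow 2).intervalIntegrable_of_Icc hab
  have hamgm : ∫ x in a..b, 2 * I * (b - a) * g x ≤ ∫ x in a..b, (I ^ 2 + (b - a) ^ 2 * g x ^ 2) :=
    intervalIntegral.integral_mono_on hab (hg1.const_mul _)
      (intervalIntegrable_const.add (hg2.const_mul _))
      fun x _ => by nlinarith [sq_nonneg (I - (b - a) * g x)]
  rw [intervalIntegral.integral_const_mul,
    intervalIntegral.integral_add intervalIntegrable_const (hg2.const_mul _),
    intervalIntegral.integral_const_mul, intervalIntegral.integral_const, smul_eq_mul] at hamgm
  nlinarith [sub_pos.2 hlt]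

theorem sq_le_integral_deriv_sq {g g' : ℝ → ℝ} (hg : ∀ y ∈ Icc (0:ℝ) 1, HasDerivAt g (g' y) y)
    (hg' : ContinuousOn g' (Icc 0 1)) (h0 : g 0 = 0) {x : ℝ} (hx : x ∈ Icc (0:ℝ) 1) :
    g x ^ 2 ≤ ∫ y in (0:ℝ)..1, g' y ^ 2 := by
  have hsub : Icc 0 x ⊆ Icc (0:ℝ) 1 := Icc_subset_Icc_right hx.2
  have hftc : ∫ y in (0:ℝ)..x, g' y = g x := by
    rw [intervalIntegral.integral_eq_sub_of_hasDerivAt (fun y hy => hg y ?_)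
      ((hg'.mono hsub).intervalIntegrable_of_Icc hx.1), h0, sub_zero]
    exact hsub (uIcc_of_le hx.1 ▸ hy)
  have hmono : ∫ y in (0:ℝ)..x, g' y ^ 2 ≤ ∫ y in (0:ℝ)..1, g' y ^ 2 :=
    intervalIntegral.integral_mono_interval le_rfl hx.1 hx.2
      (ae_of_all _ fun _ => sq_nonneg _) ((hg'.pow 2).intervalIntegrable_of_Icc zero_le_one)
  have hnn : 0 ≤ ∫ y in (0:ℝ)..x, g' y ^ 2 :=
    intervalIntegral.integral_nonneg hx.1 fun _ _ => sq_nonneg _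
  calc g x ^ 2 ≤ (x - 0) * ∫ y in (0:ℝ)..x, g' y ^ 2 :=
        hftc ▸ sq_intervalIntegral_le hx.1 (hg'.mono hsub)
    _ ≤ 1 * ∫ y in (0:ℝ)..1, g' y ^ 2 := by gcongr; linarith [hx.2]
    _ = ∫ y in (0:ℝ)..1, g' y ^ 2 := one_mul _

theorem norm_intervalIntegral_mul_le {F G : ℝ → ℂ} {a b : ℝ} (hab : a ≤ b)
    (hF : ContinuousOn F (Icc a b)) (hG : ContinuousOn G (Icc a b)) :
    ‖∫ x in a..b, F x * G x‖ ≤ ((∫ x in a..b, ‖F x‖ ^ 2) + ∫ x in a..b, ‖G x‖ ^ 2) / 2 := by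
  have hF2 : IntervalIntegrable (fun x => ‖F x‖ ^ 2) volume a b :=
    (hF.norm.pow 2).intervalIntegrable_of_Icc hab
  have hG2 : IntervalIntegrable (fun x => ‖G x‖ ^ 2) volume a b :=
    (hG.norm.pow 2).intervalIntegrable_of_Icc hab
  rw [← intervalIntegral.integral_add hF2 hG2, ← intervalIntegral.integral_div]
  refine intervalIntegral.norm_integral_le_of_norm_le hab (ae_of_all _ fun x _ => ?_)
    ((hF2.add hG2).div_const 2)
  rw [norm_mul]
  nlinarith [sq_nonneg (‖F x‖ - ‖G x‖)]

theorem hasDerivAt_intervalIntegral_of_continuous {E : Type*} [NormedAddCommGroup E]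
    [NormedSpace ℝ E] {G G' : ℝ → ℝ → E} (hG : Continuous (uncurry G))
    (hG' : Continuous (uncurry G')) (hd : ∀ x t, HasDerivAt (fun y => G y t) (G' x t) x)
    (a b x₀ : ℝ) :
    HasDerivAt (fun x => ∫ t in a..b, G x t) (∫ t in a..b, G' x₀ t) x₀ := by
  obtain ⟨C, hC⟩ : ∃ C, ∀ p ∈ Metric.closedBall x₀ 1 ×ˢ uIcc a b, ‖uncurry G' p‖ ≤ C :=
    ((isCompact_closedBall x₀ 1).prod isCompact_uIcc).exists_bound_of_continuousOn
      hG'.continuousOn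
  exact (intervalIntegral.hasDerivAt_integral_of_dominated_loc_of_deriv_le
    (bound := fun _ => C) (Metric.ball_mem_nhds x₀ one_pos)
    (.of_forall fun x => (hG.uncurry_left x).aestronglyMeasurable)
    ((hG.uncurry_left x₀).intervalIntegrable _ _) (hG'.uncurry_left x₀).aestronglyMeasurable
    (.of_forall fun t ht x hx => hC (x, t) ⟨Metric.ball_subset_closedBall hx, uIoc_subset_uIcc ht⟩)
    intervalIntegrable_const (.of_forall fun t _ x _ => hd x t)).2

end Calculus

noncomputable def partialT (w : ℝ → ℝ → ℝ) : ℝ → ℝ → ℝ := fun t x => deriv (fun s => w s x) t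

noncomputable def partialX (w : ℝ → ℝ → ℝ) : ℝ → ℝ → ℝ := fun t x => deriv (w t) x

section PartialDerivatives

variable {w : ℝ → ℝ → ℝ}

theorem hasDerivAt_partialT (hw : Differentiable ℝ (uncurry w)) (t x : ℝ) :
    HasDerivAt (fun s => w s x) (partialT w t x) t :=
  DifferentiableAt.hasDerivAt (f := fun s => w s x)
    ((hw (t, x)).comp (f := fun s => (s, x)) t
      (differentiableAt_id.prodMk (differentiableAt_const x)))

theorem hasDerivAt_partialX (hw : Differentiable ℝ (uncurry w)) (t x : ℝ) :
    HasDerivAt (w t) (partialX w t x) x :=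
  DifferentiableAt.hasDerivAt (f := w t)
    ((hw (t, x)).comp (f := fun y => (t, y)) x
      ((differentiableAt_const t).prodMk differentiableAt_id))

theorem uncurry_partialT (hw : Differentiable ℝ (uncurry w)) :
    uncurry (partialT w) = fun p => fderiv ℝ (uncurry w) p (1, 0) := by
  ext ⟨t, x⟩
  have := ((hw (t, x)).hasFDerivAt.comp t
    ((hasFDerivAt_id t).prodMk (hasFDerivAt_const x t))).hasDerivAt
  exact (hasDerivAt_partialT hw t x).unique (by simpa [Function.comp_def] using this)

theorem uncurry_partialX (hw : Differentiable ℝ (uncurry w)) :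
    uncurry (partialX w) = fun p => fderiv ℝ (uncurry w) p (0, 1) := by
  ext ⟨t, x⟩
  have := ((hw (t, x)).hasFDerivAt.comp x
    ((hasFDerivAt_const t x).prodMk (hasFDerivAt_id x))).hasDerivAt
  exact (hasDerivAt_partialX hw t x).unique (by simpa [Function.comp_def] using this)

theorem contDiff_partialT {n : WithTop ℕ∞} (hw : ContDiff ℝ (n + 1) (uncurry w)) :
    ContDiff ℝ n (uncurry (partialT w)) := by
  rw [uncurry_partialT (hw.differentiable (by simp))]
  exact (hw.fderiv_right le_rfl).clm_apply contDiff_const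

theorem contDiff_partialX {n : WithTop ℕ∞} (hw : ContDiff ℝ (n + 1) (uncurry w)) :
    ContDiff ℝ n (uncurry (partialX w)) := by
  rw [uncurry_partialX (hw.differentiable (by simp))]
  exact (hw.fderiv_right le_rfl).clm_apply contDiff_const

theorem continuous_partialT (hw : ContDiff ℝ 1 (uncurry w)) :
    Continuous (uncurry (partialT w)) :=
  (contDiff_partialT (n := 0) (by simpa using hw)).continuous

theorem continuous_partialX (hw : ContDiff ℝ 1 (uncurry w)) :
    Continuous (uncurry (partialX w)) :=
  (contDiff_partialX (n := 0) (by simpa using hw)).continuous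

theorem partialX_sq (hw : Differentiable ℝ (uncurry w)) (t x : ℝ) :
    partialX (fun t x => w t x ^ 2) t x = 2 * w t x * partialX w t x := by
  show deriv (fun y => w t y ^ 2) x = _
  simpa using ((hasDerivAt_partialX hw t x).fun_pow 2).deriv

end PartialDerivatives

noncomputable def sliceEnergy (w : ℝ → ℝ → ℝ) (t : ℝ) : ℝ := ∫ x in (0:ℝ)..1, w t x ^ 2

section SliceEnergy

variable {w : ℝ → ℝ → ℝ}

theorem sliceEnergy_nonneg (w : ℝ → ℝ → ℝ) (t : ℝ) : 0 ≤ sliceEnergy w t :=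
  intervalIntegral.integral_nonneg zero_le_one fun _ _ => sq_nonneg _

theorem continuous_sliceEnergy (hw : Continuous (uncurry w)) : Continuous (sliceEnergy w) :=
  intervalIntegral.continuous_parametric_intervalIntegral_of_continuous'
    (f := fun t x => w t x ^ 2) (hw.fun_pow 2) 0 1

theorem hasDerivAt_sliceEnergy (hw : ContDiff ℝ 1 (uncurry w)) (t : ℝ) :
    HasDerivAt (sliceEnergy w) (2 * ∫ x in (0:ℝ)..1, w t x * partialT w t x) t := by
  rw [← intervalIntegral.integral_const_mul]
  exact hasDerivAt_intervalIntegral_of_continuous (G := fun s x => w s x ^ 2)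
    (hw.continuous.fun_pow 2)
    (continuous_const.fun_mul (hw.continuous.fun_mul (continuous_partialT hw)))
    (fun s x => by
      simpa [mul_assoc] using (hasDerivAt_partialT (hw.differentiable one_ne_zero) s x).fun_pow 2)
    0 1 t

theorem sq_le_sliceEnergy_partialX (hw : ContDiff ℝ 1 (uncurry w)) (h0 : ∀ t, w t 0 = 0)
    (t : ℝ) {x : ℝ} (hx : x ∈ Icc (0:ℝ) 1) : w t x ^ 2 ≤ sliceEnergy (partialX w) t :=
  sq_le_integral_deriv_sq (fun y _ => hasDerivAt_partialX (hw.differentiable one_ne_zero) t y)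
    ((continuous_partialX hw).uncurry_left t).continuousOn (h0 t) hx

theorem sliceEnergy_le_sliceEnergy_partialX (hw : ContDiff ℝ 1 (uncurry w))
    (h0 : ∀ t, w t 0 = 0) (t : ℝ) : sliceEnergy w t ≤ sliceEnergy (partialX w) t := by
  calc sliceEnergy w t ≤ ∫ _ in (0:ℝ)..1, sliceEnergy (partialX w) t :=
        intervalIntegral.integral_mono_on zero_le_one
          (((hw.continuous.uncurry_left t).pow 2).intervalIntegrable 0 1)
          intervalIntegrable_const fun x hx => sq_le_sliceEnergy_partialX hw h0 t hx
    _ = sliceEnergy (partialX w) t := by simp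

theorem integral_sliceEnergy_le_integral_sliceEnergy_partialX (hw : ContDiff ℝ 1 (uncurry w))
    (h0 : ∀ t, w t 0 = 0) :
    ∫ t in (0:ℝ)..1, sliceEnergy w t ≤ ∫ t in (0:ℝ)..1, sliceEnergy (partialX w) t :=
  intervalIntegral.integral_mono_on zero_le_one
    ((continuous_sliceEnergy hw.continuous).intervalIntegrable 0 1)
    ((continuous_sliceEnergy (continuous_partialX hw)).intervalIntegrable 0 1)
    fun t _ => sliceEnergy_le_sliceEnergy_partialX hw h0 t

theorem sliceEnergy_sq_le (hw : ContDiff ℝ 1 (uncurry w)) (h0 : ∀ t, w t 0 = 0) (t : ℝ) :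
    sliceEnergy (fun t x => w t x ^ 2) t ≤ sliceEnergy (partialX w) t * sliceEnergy w t := by
  show ∫ x in (0:ℝ)..1, (w t x ^ 2) ^ 2 ≤ sliceEnergy (partialX w) t * ∫ x in (0:ℝ)..1, w t x ^ 2
  rw [← intervalIntegral.integral_const_mul]
  refine intervalIntegral.integral_mono_on zero_le_one
    ((((hw.continuous.uncurry_left t).pow 2).pow 2).intervalIntegrable 0 1)
    ((continuous_const.mul ((hw.continuous.uncurry_left t).pow 2)).intervalIntegrable 0 1)
    fun x hx => ?_
  simpa only [sq (w t x ^ 2)] using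
    mul_le_mul_of_nonneg_right (sq_le_sliceEnergy_partialX hw h0 t hx) (sq_nonneg (w t x))

theorem integral_sliceEnergy_sq_le (hw : ContDiff ℝ 1 (uncurry w)) (h0 : ∀ t, w t 0 = 0)
    {C : ℝ} (hC : ∀ t ∈ Icc (0:ℝ) 1, sliceEnergy w t ≤ C) :
    ∫ t in (0:ℝ)..1, sliceEnergy (fun t x => w t x ^ 2) t
      ≤ C * ∫ t in (0:ℝ)..1, sliceEnergy (partialX w) t := by
  rw [← intervalIntegral.integral_const_mul]
  refine intervalIntegral.integral_mono_on zero_le_one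
    ((continuous_sliceEnergy (w := fun t x => w t x ^ 2)
      (hw.continuous.fun_pow 2)).intervalIntegrable 0 1)
    ((continuous_const.mul
      (continuous_sliceEnergy (continuous_partialX hw))).intervalIntegrable 0 1)
    fun t ht => (sliceEnergy_sq_le hw h0 t).trans ?_
  rw [mul_comm C]
  exact mul_le_mul_of_nonneg_left (hC t ht) (sliceEnergy_nonneg _ t)

theorem integral_sq_mul_partialX_eq_zero (hw : ContDiff ℝ 1 (uncurry w))
    (h0 : ∀ t, w t 0 = 0) (h1 : ∀ t, w t 1 = 0) (t : ℝ) :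
    ∫ x in (0:ℝ)..1, w t x ^ 2 * partialX w t x = 0 := by
  have := intervalIntegral.integral_comp_mul_deriv (a := 0) (b := 1) (g := fun y => y ^ 2)
    (fun x _ => hasDerivAt_partialX (hw.differentiable one_ne_zero) t x)
    ((continuous_partialX hw).uncurry_left t).continuousOn (continuous_pow 2)
  simpa [h0, h1] using this

theorem integral_mul_partialX_partialX (hw : ContDiff ℝ 2 (uncurry w))
    (h0 : ∀ t, w t 0 = 0) (h1 : ∀ t, w t 1 = 0) (t : ℝ) :
    ∫ x in (0:ℝ)..1, w t x * partialX (partialX w) t x = -sliceEnergy (partialX w) t := by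
  have hw1 : ContDiff ℝ 1 (uncurry (partialX w)) := contDiff_partialX (n := 1) hw
  have := intervalIntegral.integral_mul_deriv_eq_deriv_mul
    (fun x _ => hasDerivAt_partialX (hw.differentiable two_ne_zero) t x)
    (fun x _ => hasDerivAt_partialX (hw1.differentiable one_ne_zero) t x)
    ((hw1.continuous.uncurry_left t).intervalIntegrable 0 1)
    (((continuous_partialX hw1).uncurry_left t).intervalIntegrable 0 1)
  simpa [h0, h1, sliceEnergy, sq] using this

theorem continuous_integral_mul {v : ℝ → ℝ → ℝ} (hv : Continuous (uncurry v))
    (hw : Continuous (uncurry w)) : Continuous fun t => ∫ x in (0:ℝ)..1, v t x * w t x :=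
  intervalIntegral.continuous_parametric_intervalIntegral_of_continuous'
    (f := fun t x => v t x * w t x) (hv.mul hw) 0 1

theorem integral_mul_le_sliceEnergy {v : ℝ → ℝ → ℝ} (hv : Continuous (uncurry v))
    (hw : Continuous (uncurry w)) {ε : ℝ} (hε : 0 < ε) (t : ℝ) :
    ∫ x in (0:ℝ)..1, v t x * w t x ≤ sliceEnergy v t / (2 * ε) + ε / 2 * sliceEnergy w t := by
  have hv2 : IntervalIntegrable (fun x => v t x ^ 2) volume 0 1 :=
    ((hv.uncurry_left t).pow 2).intervalIntegrable 0 1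
  have hw2 : IntervalIntegrable (fun x => w t x ^ 2) volume 0 1 :=
    ((hw.uncurry_left t).pow 2).intervalIntegrable 0 1
  rw [sliceEnergy, sliceEnergy, ← intervalIntegral.integral_div,
    ← intervalIntegral.integral_const_mul,
    ← intervalIntegral.integral_add (hv2.div_const _) (hw2.const_mul _)]
  refine intervalIntegral.integral_mono_on zero_le_one
    (((hv.uncurry_left t).mul (hw.uncurry_left t)).intervalIntegrable 0 1)
    ((hv2.div_const _).add (hw2.const_mul _)) fun x _ => ?_
  rw [div_add' _ _ _ (by positivity), le_div_iff₀ (by positivity)]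
  nlinarith [sq_nonneg (v t x - ε * w t x)]

end SliceEnergy

section TimeFourierCoeff

variable {w : ℝ → ℝ → ℝ}

theorem timeFourierCoeff_eq_fourierCoeffOn (w : ℝ → ℝ → ℝ) (k : ℤ) (x : ℝ) :
    timeFourierCoeff w k x = fourierCoeffOn zero_lt_one (fun t => (w t x : ℂ)) k := by
  simp only [fourierCoeffOn_eq_integral, fourier_coe_apply, timeFourierCoeff, sub_zero, div_one,
    one_smul, smul_eq_mul]
  refine intervalIntegral.integral_congr fun t _ => ?_
  rw [mul_comm]
  push_cast
  ring_nf

theorem hasSum_sq_timeFourierCoeff {x : ℝ} (hw : Continuous fun t => w t x) :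
    HasSum (fun k => ‖timeFourierCoeff w k x‖ ^ 2) (∫ t in (0:ℝ)..1, w t x ^ 2) := by
  have hL2 : MemLp (fun t => (w t x : ℂ)) 2 (volume.restrict (Ioc 0 1)) :=
    (memLp_two_iff_integrable_sq_norm (by fun_prop)).2
      (Continuous.integrableOn_Ioc (by fun_prop))
  simpa [timeFourierCoeff_eq_fourierCoeffOn] using hasSum_sq_fourierCoeffOn zero_lt_one hL2

theorem continuous_timeFourierCoeff (hw : Continuous (uncurry w)) (k : ℤ) :
    Continuous (timeFourierCoeff w k) :=
  intervalIntegral.continuous_parametric_intervalIntegral_of_continuous'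
    ((continuous_ofReal.comp (hw.comp continuous_swap)).mul (by fun_prop)) 0 1

theorem hasDerivAt_timeFourierCoeff (hw : ContDiff ℝ 1 (uncurry w)) (k : ℤ) (x : ℝ) :
    HasDerivAt (timeFourierCoeff w k) (timeFourierCoeff (partialX w) k x) x :=
  hasDerivAt_intervalIntegral_of_continuous
    ((continuous_ofReal.comp (hw.continuous.comp continuous_swap)).mul (by fun_prop))
    ((continuous_ofReal.comp ((continuous_partialX hw).comp continuous_swap)).mul (by fun_prop))
    (fun y t => (hasDerivAt_partialX (hw.differentiable one_ne_zero) t y).ofReal_comp.mul_const _)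
    0 1 x

theorem timeFourierCoeff_partialT (hw : ContDiff ℝ 1 (uncurry w)) (hper : ∀ x, w 1 x = w 0 x)
    (k : ℤ) (x : ℝ) :
    timeFourierCoeff (partialT w) k x = 2 * π * I * k * timeFourierCoeff w k x := by
  have he : ∀ t : ℝ, HasDerivAt (fun s : ℝ => exp (-2 * π * I * k * s))
      (-2 * π * I * k * exp (-2 * π * I * k * t)) t := fun t => by
    simpa [mul_comm] using ((hasDerivAt_id (t : ℂ)).const_mul (-2 * π * I * k)).cexp.comp_ofReal
  have he1 : exp (-2 * π * I * k * (1 : ℝ)) = 1 := by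
    rw [← exp_int_mul_two_pi_mul_I (-k)]
    push_cast
    ring_nf
  have hibp := intervalIntegral.integral_mul_deriv_eq_deriv_mul
    (fun t _ => (hasDerivAt_partialT (hw.differentiable one_ne_zero) t x).ofReal_comp)
    (fun t _ => he t)
    ((continuous_ofReal.comp ((continuous_partialT hw).uncurry_right x)).intervalIntegrable 0 1)
    ((continuous_const.mul (by fun_prop)).intervalIntegrable 0 1)
  simp only [hper, he1, ofReal_zero, mul_zero, exp_zero, mul_one, sub_self, zero_sub] at hibp
  have hpull : ∫ t in (0:ℝ)..1, (w t x : ℂ) * (-2 * π * I * k * exp (-2 * π * I * k * t))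
      = -2 * π * I * k * timeFourierCoeff w k x := by
    rw [timeFourierCoeff, ← intervalIntegral.integral_const_mul]
    exact intervalIntegral.integral_congr fun t _ => by ring
  simp only [timeFourierCoeff] at hpull ⊢
  linear_combination hibp - hpull

theorem timeFourierCoeff_of_forall_eq_zero {x : ℝ} (h : ∀ t, w t x = 0) (k : ℤ) :
    timeFourierCoeff w k x = 0 := by
  simp [timeFourierCoeff, h]

noncomputable def timeFourierEnergy (w : ℝ → ℝ → ℝ) (k : ℤ) : ℝ :=
  ∫ x in (0:ℝ)..1, ‖timeFourierCoeff w k x‖ ^ 2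

noncomputable def timeFourierPairing (v w : ℝ → ℝ → ℝ) (k : ℤ) : ℂ :=
  ∫ x in (0:ℝ)..1, timeFourierCoeff v k x * conj (timeFourierCoeff w k x)

theorem timeFourierEnergy_nonneg (w : ℝ → ℝ → ℝ) (k : ℤ) : 0 ≤ timeFourierEnergy w k :=
  intervalIntegral.integral_nonneg zero_le_one fun _ _ => sq_nonneg _

theorem sum_timeFourierEnergy_le (hw : Continuous (uncurry w)) (s : Finset ℤ) :
    ∑ k ∈ s, timeFourierEnergy w k ≤ ∫ t in (0:ℝ)..1, sliceEnergy w t := by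
  have hsq : Continuous (uncurry fun t x => w t x ^ 2) := hw.fun_pow 2
  have hint : IntegrableOn (uncurry fun t x => w t x ^ 2) (uIoc 0 1 ×ˢ uIoc 0 1) :=
    (hsq.continuousOn.integrableOn_compact (isCompact_Icc.prod isCompact_Icc)).mono_set
      (prod_mono uIoc_subset_uIcc uIoc_subset_uIcc)
  have hcoeff : ∀ k, Continuous fun x => ‖timeFourierCoeff w k x‖ ^ 2 := fun k =>
    (continuous_timeFourierCoeff hw k).norm.pow 2
  simp only [timeFourierEnergy, sliceEnergy]
  rw [intervalIntegral_intervalIntegral_swap hint,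
    ← intervalIntegral.integral_finsetSum fun k _ => (hcoeff k).intervalIntegrable 0 1]
  refine intervalIntegral.integral_mono_on zero_le_one
    ((continuous_finsetSum s fun k _ => hcoeff k).intervalIntegrable 0 1)
    ((intervalIntegral.continuous_parametric_intervalIntegral_of_continuous'
      (f := fun x t => w t x ^ 2) (hsq.comp continuous_swap) 0 1).intervalIntegrable 0 1)
    fun x _ => sum_le_hasSum s (fun _ _ => sq_nonneg _)
      (hasSum_sq_timeFourierCoeff (hw.uncurry_right x))

theorem timeFourierPairing_self (w : ℝ → ℝ → ℝ) (k : ℤ) :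
    timeFourierPairing w w k = timeFourierEnergy w k := by
  simp only [timeFourierPairing, timeFourierEnergy, mul_conj, normSq_eq_norm_sq,
    intervalIntegral.integral_ofReal]

theorem norm_timeFourierPairing_le {v : ℝ → ℝ → ℝ} (hv : Continuous (uncurry v))
    (hw : Continuous (uncurry w)) (k : ℤ) :
    ‖timeFourierPairing v w k‖ ≤ (timeFourierEnergy v k + timeFourierEnergy w k) / 2 := by
  simpa [timeFourierPairing, timeFourierEnergy] using norm_intervalIntegral_mul_le zero_le_one
    (continuous_timeFourierCoeff hv k).continuousOn
    (continuous_conj.comp (continuous_timeFourierCoeff hw k)).continuousOn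

theorem timeFourierPairing_partialX {v : ℝ → ℝ → ℝ} (hv : ContDiff ℝ 1 (uncurry v))
    (hw : ContDiff ℝ 1 (uncurry w)) (h0 : ∀ t, w t 0 = 0) (h1 : ∀ t, w t 1 = 0) (k : ℤ) :
    timeFourierPairing (partialX v) w k = -timeFourierPairing v (partialX w) k := by
  have hibp := intervalIntegral.integral_mul_deriv_eq_deriv_mul
    (fun x _ => hasDerivAt_timeFourierCoeff hv k x)
    (fun x _ => (hasDerivAt_timeFourierCoeff hw k x).star)
    ((continuous_timeFourierCoeff (continuous_partialX hv) k).intervalIntegrable 0 1)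
    ((continuous_star.comp
      (continuous_timeFourierCoeff (continuous_partialX hw) k)).intervalIntegrable 0 1)
  simp only [timeFourierCoeff_of_forall_eq_zero h0, timeFourierCoeff_of_forall_eq_zero h1,
    star_zero, mul_zero, sub_zero, zero_sub] at hibp
  simp only [timeFourierPairing, starRingEnd_apply, hibp, neg_neg]

theorem timeFourierPairing_partialT_self (hw : ContDiff ℝ 1 (uncurry w))
    (hper : ∀ x, w 1 x = w 0 x) (k : ℤ) :
    timeFourierPairing (partialT w) w k = 2 * π * I * k * timeFourierEnergy w k := by
  rw [← timeFourierPairing_self, timeFourierPairing, timeFourierPairing,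
    ← intervalIntegral.integral_const_mul]
  refine intervalIntegral.integral_congr fun x _ => ?_
  simp only [timeFourierCoeff_partialT hw hper, mul_assoc]

theorem timeFourierPairing_congr_left {v v' : ℝ → ℝ → ℝ}
    (h : ∀ t, ∀ x ∈ Icc (0:ℝ) 1, v t x = v' t x) (k : ℤ) :
    timeFourierPairing v w k = timeFourierPairing v' w k := by
  refine intervalIntegral.integral_congr fun x hx => ?_
  rw [uIcc_of_le zero_le_one] at hx
  simp only [timeFourierCoeff, h _ x hx]

theorem timeFourierPairing_add_left {v v' : ℝ → ℝ → ℝ} (hv : Continuous (uncurry v))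
    (hv' : Continuous (uncurry v')) (hw : Continuous (uncurry w)) (k : ℤ) :
    timeFourierPairing (fun t x => v t x + v' t x) w k
      = timeFourierPairing v w k + timeFourierPairing v' w k := by
  have hcoeff : ∀ x, timeFourierCoeff (fun t x => v t x + v' t x) k x
      = timeFourierCoeff v k x + timeFourierCoeff v' k x := fun x => by
    simp only [timeFourierCoeff, ofReal_add, add_mul]
    exact intervalIntegral.integral_add
      (((continuous_ofReal.comp (hv.uncurry_right x)).mul (by fun_prop)).intervalIntegrable 0 1)
      (((continuous_ofReal.comp (hv'.uncurry_right x)).mul (by fun_prop)).intervalIntegrable 0 1)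
  have hconj := continuous_conj.comp (continuous_timeFourierCoeff hw k)
  simp only [timeFourierPairing, hcoeff, add_mul]
  exact intervalIntegral.integral_add
    (((continuous_timeFourierCoeff hv k).mul hconj).intervalIntegrable 0 1)
    (((continuous_timeFourierCoeff hv' k).mul hconj).intervalIntegrable 0 1)

theorem timeFourierPairing_const_mul_left (c : ℝ) (v : ℝ → ℝ → ℝ) (k : ℤ) :
    timeFourierPairing (fun t x => c * v t x) w k = c * timeFourierPairing v w k := by
  simp only [timeFourierPairing, timeFourierCoeff, ofReal_mul, mul_assoc,
    intervalIntegral.integral_const_mul]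

end TimeFourierCoeff

structure IsPeriodicBurgersSolution (μ lam : ℝ) (f u : ℝ → ℝ → ℝ) : Prop where
  contDiff : ContDiff ℝ 2 (uncurry u)
  periodic : ∀ t x, u (t + 1) x = u t x
  zero_left : ∀ t, u t 0 = 0
  zero_right : ∀ t, u t 1 = 0
  equation : ∀ t, ∀ x ∈ Icc (0:ℝ) 1,
    partialT u t x + lam * u t x * partialX u t x - μ * partialX (partialX u) t x = f t x

namespace IsPeriodicBurgersSolution

variable {μ lam : ℝ} {f u : ℝ → ℝ → ℝ}

theorem contDiff_one (hu : IsPeriodicBurgersSolution μ lam f u) : ContDiff ℝ 1 (uncurry u) :=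
  hu.contDiff.of_le one_le_two

theorem contDiff_partialX (hu : IsPeriodicBurgersSolution μ lam f u) :
    ContDiff ℝ 1 (uncurry (partialX u)) :=
  _root_.contDiff_partialX (n := 1) hu.contDiff

theorem contDiff_sq (hu : IsPeriodicBurgersSolution μ lam f u) :
    ContDiff ℝ 1 (uncurry fun t x => u t x ^ 2) :=
  hu.contDiff_one.pow 2

theorem sliceEnergy_periodic (hu : IsPeriodicBurgersSolution μ lam f u) :
    Periodic (sliceEnergy u) 1 := fun t => by
  simp only [sliceEnergy, hu.periodic]

theorem integral_mul_partialT (hu : IsPeriodicBurgersSolution μ lam f u)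
    (hf : Continuous (uncurry f)) (t : ℝ) :
    ∫ x in (0:ℝ)..1, u t x * partialT u t x
      = (∫ x in (0:ℝ)..1, f t x * u t x) - μ * sliceEnergy (partialX u) t := by
  have hft := hf.uncurry_left t
  have hut := hu.contDiff.continuous.uncurry_left t
  have huxt := (continuous_partialX hu.contDiff_one).uncurry_left t
  have huxxt := (continuous_partialX hu.contDiff_partialX).uncurry_left t
  have hpt : ∀ x ∈ uIcc (0:ℝ) 1, u t x * partialT u t x = f t x * u t x
      - lam * (u t x ^ 2 * partialX u t x) + μ * (u t x * partialX (partialX u) t x) := by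
    intro x hx
    rw [uIcc_of_le zero_le_one] at hx
    rw [← hu.equation t x hx]
    ring
  rw [intervalIntegral.integral_congr hpt,
    intervalIntegral.integral_add (by apply Continuous.intervalIntegrable; fun_prop)
      (by apply Continuous.intervalIntegrable; fun_prop),
    intervalIntegral.integral_sub (by apply Continuous.intervalIntegrable; fun_prop)
      (by apply Continuous.intervalIntegrable; fun_prop),
    intervalIntegral.integral_const_mul, intervalIntegral.integral_const_mul,
    integral_sq_mul_partialX_eq_zero hu.contDiff_one hu.zero_left hu.zero_right,
    integral_mul_partialX_partialX hu.contDiff hu.zero_left hu.zero_right]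
  ring

theorem hasDerivAt_sliceEnergy (hu : IsPeriodicBurgersSolution μ lam f u)
    (hf : Continuous (uncurry f)) (t : ℝ) :
    HasDerivAt (sliceEnergy u)
      (2 * ((∫ x in (0:ℝ)..1, f t x * u t x) - μ * sliceEnergy (partialX u) t)) t :=
  hu.integral_mul_partialT hf t ▸ _root_.hasDerivAt_sliceEnergy hu.contDiff_one t

theorem integral_sliceEnergy_partialX (hu : IsPeriodicBurgersSolution μ lam f u)
    (hf : Continuous (uncurry f)) :
    μ * ∫ t in (0:ℝ)..1, sliceEnergy (partialX u) t
      = ∫ t in (0:ℝ)..1, ∫ x in (0:ℝ)..1, f t x * u t x := by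
  have hP := continuous_integral_mul hf hu.contDiff.continuous
  have hD := continuous_sliceEnergy (continuous_partialX hu.contDiff_one)
  have hftc := intervalIntegral.integral_eq_sub_of_hasDerivAt
    (fun t _ => hu.hasDerivAt_sliceEnergy hf t)
    ((continuous_const.mul (hP.sub (continuous_const.mul hD))).intervalIntegrable 0 1)
  rw [show (1:ℝ) = 0 + 1 by norm_num, hu.sliceEnergy_periodic 0, zero_add, sub_self,
    intervalIntegral.integral_const_mul,
    intervalIntegral.integral_sub (hP.intervalIntegrable 0 1)
      ((hD.intervalIntegrable 0 1).const_mul μ),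
    intervalIntegral.integral_const_mul] at hftc
  linarith

theorem integral_sliceEnergy_partialX_le (hu : IsPeriodicBurgersSolution μ lam f u)
    (hf : Continuous (uncurry f)) (hμ : 0 < μ) :
    ∫ t in (0:ℝ)..1, sliceEnergy (partialX u) t ≤ (∫ t in (0:ℝ)..1, sliceEnergy f t) / μ ^ 2 := by
  set B := ∫ t in (0:ℝ)..1, sliceEnergy (partialX u) t
  set F := ∫ t in (0:ℝ)..1, sliceEnergy f t
  have hcu := hu.contDiff.continuous
  have hA := integral_sliceEnergy_le_integral_sliceEnergy_partialX hu.contDiff_one hu.zero_left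
  have hfu : μ * B ≤ F / (2 * μ) + μ / 2 * ∫ t in (0:ℝ)..1, sliceEnergy u t := by
    rw [hu.integral_sliceEnergy_partialX hf, ← intervalIntegral.integral_div,
      ← intervalIntegral.integral_const_mul,
      ← intervalIntegral.integral_add
        (((continuous_sliceEnergy hf).intervalIntegrable 0 1).div_const _)
        (((continuous_sliceEnergy hcu).intervalIntegrable 0 1).const_mul _)]
    exact intervalIntegral.integral_mono_on zero_le_one
      ((continuous_integral_mul hf hcu).intervalIntegrable 0 1)
      ((((continuous_sliceEnergy hf).div_const _).add
        (continuous_const.mul (continuous_sliceEnergy hcu))).intervalIntegrable 0 1)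
      fun t _ => integral_mul_le_sliceEnergy hf hcu hμ t
  have hB : μ * B ≤ F / (2 * μ) + μ / 2 * B := hfu.trans (by gcongr)
  have hF : F / (2 * μ) * μ = F / 2 := by field_simp
  rw [le_div_iff₀ (by positivity)]
  nlinarith

theorem sliceEnergy_sub_le (hu : IsPeriodicBurgersSolution μ lam f u)
    (hf : Continuous (uncurry f)) (hμ : 0 ≤ μ) {a b : ℝ} (hab : a ≤ b) :
    sliceEnergy u b - sliceEnergy u a ≤ ∫ s in a..b, (sliceEnergy f s + sliceEnergy u s) := by
  have hcu := hu.contDiff.continuous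
  have hderiv : Continuous fun s => 2 * ((∫ x in (0:ℝ)..1, f s x * u s x)
      - μ * sliceEnergy (partialX u) s) :=
    continuous_const.mul ((continuous_integral_mul hf hcu).sub
      (continuous_const.mul (continuous_sliceEnergy (continuous_partialX hu.contDiff_one))))
  rw [← intervalIntegral.integral_eq_sub_of_hasDerivAt
    (fun s _ => hu.hasDerivAt_sliceEnergy hf s) (hderiv.intervalIntegrable a b)]
  refine intervalIntegral.integral_mono_on hab (hderiv.intervalIntegrable a b)
    (((continuous_sliceEnergy hf).add (continuous_sliceEnergy hcu)).intervalIntegrable a b)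
    fun s _ => ?_
  have := integral_mul_le_sliceEnergy hf hcu one_pos s
  nlinarith [mul_nonneg hμ (sliceEnergy_nonneg (partialX u) s)]

theorem sliceEnergy_le (hu : IsPeriodicBurgersSolution μ lam f u)
    (hf : Continuous (uncurry f)) (hμ : 0 ≤ μ) (t : ℝ) :
    sliceEnergy u t
      ≤ 2 * (∫ s in (0:ℝ)..1, sliceEnergy u s) + ∫ s in (0:ℝ)..2, sliceEnergy f s := by
  have hE := continuous_sliceEnergy hu.contDiff.continuous
  have hΦ := continuous_sliceEnergy hf
  -- start from a time `t₀` where the energy is at most its mean, and reach `t` modulo 1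
  obtain ⟨t₀, ht₀, hmin⟩ := isCompact_Icc.exists_isMinOn (nonempty_Icc.2 zero_le_one)
    hE.continuousOn
  have hEt₀ : sliceEnergy u t₀ ≤ ∫ s in (0:ℝ)..1, sliceEnergy u s :=
    calc sliceEnergy u t₀ = ∫ _ in (0:ℝ)..1, sliceEnergy u t₀ := by simp
      _ ≤ ∫ s in (0:ℝ)..1, sliceEnergy u s := intervalIntegral.integral_mono_on zero_le_one
        intervalIntegrable_const (hE.intervalIntegrable 0 1) fun s hs => hmin hs
  obtain ⟨t', ht', hEt⟩ := hu.sliceEnergy_periodic.exists_mem_Ico one_pos t t₀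
  have hwindow : ∫ s in t₀..t', (sliceEnergy f s + sliceEnergy u s)
      ≤ (∫ s in t₀..t₀ + 1, sliceEnergy f s) + ∫ s in t₀..t₀ + 1, sliceEnergy u s :=
    (intervalIntegral.integral_mono_interval le_rfl ht'.1 ht'.2.le
      (ae_of_all _ fun s => add_nonneg (sliceEnergy_nonneg f s) (sliceEnergy_nonneg u s))
      ((hΦ.add hE).intervalIntegrable _ _)).trans_eq
      (intervalIntegral.integral_add (hΦ.intervalIntegrable _ _) (hE.intervalIntegrable _ _))
  have hforcing : ∫ s in t₀..t₀ + 1, sliceEnergy f s ≤ ∫ s in (0:ℝ)..2, sliceEnergy f s :=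
    intervalIntegral.integral_mono_interval ht₀.1 (by linarith) (by linarith [ht₀.2])
      (ae_of_all _ fun s => sliceEnergy_nonneg f s) (hΦ.intervalIntegrable _ _)
  have hperiod : ∫ s in t₀..t₀ + 1, sliceEnergy u s = ∫ s in (0:ℝ)..1, sliceEnergy u s := by
    simpa using hu.sliceEnergy_periodic.intervalIntegral_add_eq t₀ 0
  have := hu.sliceEnergy_sub_le hf hμ ht'.1
  rw [hEt]
  linarith

theorem two_pi_I_mul_timeFourierEnergy (hu : IsPeriodicBurgersSolution μ lam f u)
    (hf : Continuous (uncurry f)) (k : ℤ) :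
    2 * π * I * k * timeFourierEnergy u k = timeFourierPairing f u k
      + (lam / 2 : ℝ) * timeFourierPairing (fun t x => u t x ^ 2) (partialX u) k
      - μ * timeFourierEnergy (partialX u) k := by
  have hcu := hu.contDiff.continuous
  have hcsqx := continuous_partialX hu.contDiff_sq
  have hcuxx := continuous_partialX hu.contDiff_partialX
  -- `u u_x = (u²)_x / 2`, so that the nonlinear term can also be integrated by parts in `x`
  have hcons : ∀ t, ∀ x ∈ Icc (0:ℝ) 1, partialT u t x
      = f t x + (-(lam / 2) * partialX (fun t x => u t x ^ 2) t x
        + μ * partialX (partialX u) t x) := fun t x hx => by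
    rw [partialX_sq (hu.contDiff.differentiable two_ne_zero), ← hu.equation t x hx]
    ring
  rw [← timeFourierPairing_partialT_self hu.contDiff_one (fun x => by simpa using hu.periodic 0 x),
    timeFourierPairing_congr_left hcons,
    timeFourierPairing_add_left hf ?_ hcu,
    timeFourierPairing_add_left ?_ ?_ hcu,
    timeFourierPairing_const_mul_left, timeFourierPairing_const_mul_left,
    timeFourierPairing_partialX hu.contDiff_sq hu.contDiff_one hu.zero_left hu.zero_right,
    timeFourierPairing_partialX hu.contDiff_partialX hu.contDiff_one hu.zero_left hu.zero_right,
    timeFourierPairing_self]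
  · push_cast
    ring
  exacts [continuous_const.mul hcsqx, continuous_const.mul hcuxx,
    (continuous_const.mul hcsqx).add (continuous_const.mul hcuxx)]

theorem abs_mul_timeFourierEnergy_le (hu : IsPeriodicBurgersSolution μ lam f u)
    (hf : Continuous (uncurry f)) (hlam : lam ∈ Icc (0:ℝ) 1) (hμ : 0 ≤ μ) (k : ℤ) :
    |(k : ℝ)| * timeFourierEnergy u k
      ≤ (timeFourierEnergy f k + timeFourierEnergy u k
          + timeFourierEnergy (fun t x => u t x ^ 2) k + timeFourierEnergy (partialX u) k) / 2
        + μ * timeFourierEnergy (partialX u) k := by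
  have hnorm : 2 * π * |(k : ℝ)| * timeFourierEnergy u k
      ≤ ‖timeFourierPairing f u k‖
        + lam / 2 * ‖timeFourierPairing (fun t x => u t x ^ 2) (partialX u) k‖
        + μ * timeFourierEnergy (partialX u) k :=
    calc 2 * π * |(k : ℝ)| * timeFourierEnergy u k
        = ‖2 * π * I * k * timeFourierEnergy u k‖ := by
          simp [abs_of_nonneg (timeFourierEnergy_nonneg u k), abs_of_pos Real.pi_pos]
      _ ≤ ‖timeFourierPairing f u k‖
          + ‖((lam / 2 : ℝ) : ℂ) * timeFourierPairing (fun t x => u t x ^ 2) (partialX u) k‖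
          + ‖(μ : ℂ) * timeFourierEnergy (partialX u) k‖ := by
          rw [hu.two_pi_I_mul_timeFourierEnergy hf k]
          exact norm_sub_le_of_le (norm_add_le _ _) le_rfl
      _ = _ := by
          simp [abs_of_nonneg hlam.1, abs_of_nonneg hμ,
            abs_of_nonneg (timeFourierEnergy_nonneg (partialX u) k)]
  have hpi : |(k : ℝ)| * timeFourierEnergy u k ≤ 2 * π * |(k : ℝ)| * timeFourierEnergy u k := by
    rw [mul_assoc]
    exact le_mul_of_one_le_left (mul_nonneg (abs_nonneg _) (timeFourierEnergy_nonneg u k))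
      (by linarith [Real.pi_gt_three])
  have h1 := norm_timeFourierPairing_le hf hu.contDiff.continuous k
  have h2 := norm_timeFourierPairing_le hu.contDiff_sq.continuous
    (continuous_partialX hu.contDiff_one) k
  have h3 := mul_le_mul_of_nonneg_left h2 (by linarith [hlam.1] : 0 ≤ lam / 2)
  nlinarith [timeFourierEnergy_nonneg (fun t x => u t x ^ 2) k,
    timeFourierEnergy_nonneg (partialX u) k, hlam.2]

theorem tsum_abs_mul_timeFourierEnergy_le (hu : IsPeriodicBurgersSolution μ lam f u)
    (hf : Continuous (uncurry f)) (hlam : lam ∈ Icc (0:ℝ) 1) (hμ : 0 ≤ μ) :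
    ∑' k : ℤ, |(k : ℝ)| * timeFourierEnergy u k
      ≤ ((∫ t in (0:ℝ)..1, sliceEnergy f t) + (∫ t in (0:ℝ)..1, sliceEnergy u t)
          + (∫ t in (0:ℝ)..1, sliceEnergy (fun t x => u t x ^ 2) t)
          + ∫ t in (0:ℝ)..1, sliceEnergy (partialX u) t) / 2
        + μ * ∫ t in (0:ℝ)..1, sliceEnergy (partialX u) t := by
  set Ef := ∫ t in (0:ℝ)..1, sliceEnergy f t
  set Eu := ∫ t in (0:ℝ)..1, sliceEnergy u t
  set Esq := ∫ t in (0:ℝ)..1, sliceEnergy (fun t x => u t x ^ 2) t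
  set Eux := ∫ t in (0:ℝ)..1, sliceEnergy (partialX u) t
  have hfin : ∀ s : Finset ℤ,
      ∑ k ∈ s, |(k : ℝ)| * timeFourierEnergy u k ≤ (Ef + Eu + Esq + Eux) / 2 + μ * Eux :=
    fun s => calc
      ∑ k ∈ s, |(k : ℝ)| * timeFourierEnergy u k
        ≤ ∑ k ∈ s, ((timeFourierEnergy f k + timeFourierEnergy u k
            + timeFourierEnergy (fun t x => u t x ^ 2) k + timeFourierEnergy (partialX u) k) / 2
          + μ * timeFourierEnergy (partialX u) k) :=
          Finset.sum_le_sum fun k _ => hu.abs_mul_timeFourierEnergy_le hf hlam hμ k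
      _ = ((∑ k ∈ s, timeFourierEnergy f k) + (∑ k ∈ s, timeFourierEnergy u k)
            + (∑ k ∈ s, timeFourierEnergy (fun t x => u t x ^ 2) k)
            + ∑ k ∈ s, timeFourierEnergy (partialX u) k) / 2
          + μ * ∑ k ∈ s, timeFourierEnergy (partialX u) k := by
          simp only [Finset.sum_add_distrib, ← Finset.sum_div, ← Finset.mul_sum]
      _ ≤ (Ef + Eu + Esq + Eux) / 2 + μ * Eux := by
          gcongr
          exacts [sum_timeFourierEnergy_le hf s,
            sum_timeFourierEnergy_le hu.contDiff.continuous s,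
            sum_timeFourierEnergy_le hu.contDiff_sq.continuous s,
            sum_timeFourierEnergy_le (continuous_partialX hu.contDiff_one) s,
            sum_timeFourierEnergy_le (continuous_partialX hu.contDiff_one) s]
  exact tsum_le_of_sum_le' (by simpa using hfin ∅) hfin

end IsPeriodicBurgersSolution

theorem burgers_homotopy_apriori_estimate_general (μ : ℝ) (hμ : 0 < μ)
    (f : ℝ → ℝ → ℝ) (hf : ContDiff ℝ (⊤ : ℕ∞) (Function.uncurry f)) :
    ∃ M : ℝ, 0 ≤ M ∧ ∀ lam ∈ Set.Icc (0:ℝ) 1, ∀ u : ℝ → ℝ → ℝ,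
      ContDiff ℝ (⊤ : ℕ∞) (Function.uncurry u) →
      (∀ t x : ℝ, u (t + 1) x = u t x) →
      (∀ t : ℝ, u t 0 = 0 ∧ u t 1 = 0) →
      (∀ t : ℝ, ∀ x ∈ Set.Icc (0:ℝ) 1,
        deriv (fun s => u s x) t + lam * u t x * deriv (u t) x
          - μ * deriv (deriv (u t)) x = f t x) →
      (∫ t in (0:ℝ)..1, ∫ x in (0:ℝ)..1, (u t x) ^ 2)
        + (∫ t in (0:ℝ)..1, ∫ x in (0:ℝ)..1, (deriv (u t) x) ^ 2)
        + (∑' k : ℤ, |(k : ℝ)| * ∫ x in (0:ℝ)..1, ‖timeFourierCoeff u k x‖ ^ 2)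
        ≤ M := by
  have hfc : Continuous (uncurry f) := hf.continuous
  have hF : 0 ≤ ∫ t in (0:ℝ)..1, sliceEnergy f t :=
    intervalIntegral.integral_nonneg zero_le_one fun t _ => sliceEnergy_nonneg f t
  have hF₂ : 0 ≤ ∫ t in (0:ℝ)..2, sliceEnergy f t :=
    intervalIntegral.integral_nonneg zero_le_two fun t _ => sliceEnergy_nonneg f t
  set F := ∫ t in (0:ℝ)..1, sliceEnergy f t
  set B := F / μ ^ 2
  set C := 2 * B + ∫ t in (0:ℝ)..2, sliceEnergy f t
  refine ⟨2 * B + ((F + B + C * B + B) / 2 + μ * B), by positivity, ?_⟩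
  intro lam hlam u hu hper hbc hpde
  have hsol : IsPeriodicBurgersSolution μ lam f u :=
    ⟨hu.of_le (WithTop.coe_le_coe.2 le_top), hper, fun t => (hbc t).1, fun t => (hbc t).2, hpde⟩
  have hD := hsol.integral_sliceEnergy_partialX_le hfc hμ
  have hE := integral_sliceEnergy_le_integral_sliceEnergy_partialX hsol.contDiff_one
    hsol.zero_left
  have hsup : ∀ t, sliceEnergy u t ≤ C := fun t => by
    have := hsol.sliceEnergy_le hfc hμ.le t
    linarith
  have hquartic := (integral_sliceEnergy_sq_le hsol.contDiff_one hsol.zero_left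
    fun t _ => hsup t).trans (mul_le_mul_of_nonneg_left hD (by positivity : 0 ≤ C))
  have hsum := hsol.tsum_abs_mul_timeFourierEnergy_le hfc hlam hμ.le
  have hμD := mul_le_mul_of_nonneg_left hD hμ.le
  change (∫ t in (0:ℝ)..1, sliceEnergy u t) + (∫ t in (0:ℝ)..1, sliceEnergy (partialX u) t)
    + ∑' k : ℤ, |(k : ℝ)| * timeFourierEnergy u k ≤ _
  linarith

/-- A priori estimate (Theorem 4.1): for fixed `μ > 0` and time-periodic forcing `f`, the set of
time-periodic solutions of the λ-homotopy Burgers equation `u_t + λ u u_x − μ u_xx = f`,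
`λ ∈ [0,1]`, with homogeneous Dirichlet boundary conditions, is bounded in `H^{1/2,1}`. -/
theorem burgers_homotopy_apriori_estimate (μ : ℝ) (hμ : 0 < μ)
    (f : ℝ → ℝ → ℝ) (hf : ContDiff ℝ (⊤ : ℕ∞) (Function.uncurry f))
    (hfper : ∀ t x : ℝ, f (t + 1) x = f t x) :
    ∃ M : ℝ, 0 ≤ M ∧ ∀ lam ∈ Set.Icc (0:ℝ) 1, ∀ u : ℝ → ℝ → ℝ,
      ContDiff ℝ (⊤ : ℕ∞) (Function.uncurry u) →
      (∀ t x : ℝ, u (t + 1) x = u t x) →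
      (∀ t : ℝ, u t 0 = 0 ∧ u t 1 = 0) →
      (∀ t : ℝ, ∀ x ∈ Set.Icc (0:ℝ) 1,
        deriv (fun s => u s x) t + lam * u t x * deriv (u t) x
          - μ * deriv (deriv (u t)) x = f t x) →
      (∫ t in (0:ℝ)..1, ∫ x in (0:ℝ)..1, (u t x) ^ 2)
        + (∫ t in (0:ℝ)..1, ∫ x in (0:ℝ)..1, (deriv (u t) x) ^ 2)
        + (∑' k : ℤ, |(k : ℝ)| * ∫ x in (0:ℝ)..1, ‖timeFourierCoeff u k x‖ ^ 2)
        ≤ M :=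
  burgers_homotopy_apriori_estimate_general μ hμ f hf
end

section
/- Let μ > 0 and let v : ℝ × [0,1] → ℝ be smooth, time-periodic, with v(t,0) = v(t,1) = 0 for all t. Suppose φ : ℝ × [0,1] → ℝ is smooth, time-periodic, strictly positive everywhere, satisfies ∂_x φ(t,0) = ∂_x φ(t,1) = 0 for all t, and solves ∂_t φ − μ ∂²_x φ + v ∂_x φ = 0 on ℝ × [0,1]. Then φ is constant. -/
/-!
Let `m` be the minimum of `φ` over one period; by periodicity it is the minimum over all times,
and `u = φ - m ≥ 0` solves the same equation. The strong minimum principle for the Neumann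
problem says that if `u(t, x) > 0` at one point, then `u(t₂, ·) > 0` on all of `[0, 1]` for every
`t₂ > t`. Choosing `t₂` among the period translates of a time at which `u` vanishes gives a
contradiction, so `u ≡ 0`.

The strong minimum principle is proved with barriers: explicit functions `w` with
`∂ₜw − μ∂ₓ²w + v∂ₓw < 0` wherever `w > 0` stay below `u` by the weak minimum principle.
The barrier `e^{-B(t - t₁)} (r² - (x - x₀)²)²` keeps `u` positive along the vertical line
through the centre of an interval where `u(t₁, ·) > 0`; the barrier
`e^{-l(b - x)} - e^{-κl(t - t₁)}` carries positivity from that line to the Neumann boundary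
point on either side.
-/

open Set Topology Function Real

theorem IsMinOn.deriv_mul_sub_nonneg {f : ℝ → ℝ} {s : Set ℝ} {x y : ℝ} (h : IsMinOn f s x)
    (hs : Convex ℝ s) (hx : x ∈ s) (hy : y ∈ s) (hf : DifferentiableAt ℝ f x) :
    0 ≤ deriv f x * (y - x) := by
  simpa [mul_comm] using h.localize.hasFDerivWithinAt_nonneg
    hf.hasDerivAt.hasFDerivAt.hasFDerivWithinAt
    (sub_mem_posTangentConeAt_of_segment_subset (hs.segment_subset hx hy))

theorem IsLocalMin.deriv_deriv_nonneg {f : ℝ → ℝ} {x : ℝ} (h : IsLocalMin f x)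
    (hf : ContinuousAt f x) : 0 ≤ deriv (deriv f) x := by
  by_contra! hneg
  have hmax := isLocalMax_of_deriv_deriv_neg hneg h.deriv_eq_zero hf
  have hconst : f =ᶠ[𝓝 x] fun _ => f x := (h.and hmax).mono fun y hy => le_antisymm hy.2 hy.1
  simp [hconst.deriv.deriv_eq] at hneg

theorem ContDiff.curry_left {n : WithTop ℕ∞} {z : ℝ → ℝ → ℝ} (hz : ContDiff ℝ n (uncurry z))
    (x : ℝ) : ContDiff ℝ n (fun t => z t x) :=
  hz.comp (contDiff_id.prodMk contDiff_const)

theorem ContDiff.curry_right {n : WithTop ℕ∞} {z : ℝ → ℝ → ℝ} (hz : ContDiff ℝ n (uncurry z))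
    (t : ℝ) : ContDiff ℝ n (z t) :=
  hz.comp (contDiff_const.prodMk contDiff_id)

noncomputable def driftDiffusion (μ : ℝ) (v z : ℝ → ℝ → ℝ) (t x : ℝ) : ℝ :=
  deriv (fun s => z s x) t - μ * deriv (deriv (z t)) x + v t x * deriv (z t) x

section DriftDiffusion

variable {μ : ℝ} {v u w z : ℝ → ℝ → ℝ} {t₁ t₂ a b : ℝ}

theorem driftDiffusion_sub (hz : ContDiff ℝ 2 (uncurry z)) (hw : ContDiff ℝ 2 (uncurry w))
    (t x : ℝ) :
    driftDiffusion μ v (fun t x => z t x - w t x) t x =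
      driftDiffusion μ v z t x - driftDiffusion μ v w t x := by
  have hzx := (hz.curry_right t).differentiable two_ne_zero
  have hwx := (hw.curry_right t).differentiable two_ne_zero
  have hderiv : deriv (fun y => z t y - w t y) = fun y => deriv (z t) y - deriv (w t) y :=
    funext fun y => deriv_fun_sub (hzx y) (hwx y)
  simp only [driftDiffusion, hderiv]
  rw [deriv_fun_sub ((hz.curry_left x).differentiable two_ne_zero t)
      ((hw.curry_left x).differentiable two_ne_zero t),
    deriv_fun_sub ((hz.curry_right t).differentiable_deriv_two x)
      ((hw.curry_right t).differentiable_deriv_two x)]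
  ring

theorem driftDiffusion_sub_const (c t x : ℝ) :
    driftDiffusion μ v (fun t x => z t x - c) t x = driftDiffusion μ v z t x := by
  simp [driftDiffusion, deriv_sub_const]

theorem driftDiffusion_comp_neg (t x : ℝ) :
    driftDiffusion μ (fun t x => -v t (-x)) (fun t x => z t (-x)) t x =
      driftDiffusion μ v z t (-x) := by
  have hderiv : deriv (fun y => z t (-y)) = fun y => -deriv (z t) (-y) :=
    funext (deriv_comp_neg (z t))
  simp only [driftDiffusion, hderiv, deriv.fun_neg, deriv_comp_neg (deriv (z t)), neg_neg]
  ring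

theorem driftDiffusion_eq_of_separated {p q g g' : ℝ → ℝ} {p' q' g'' t x : ℝ}
    (hw : ∀ t x, w t x = p t * g x + q t)
    (hp : HasDerivAt p p' t) (hq : HasDerivAt q q' t) (hg : ∀ y, HasDerivAt g (g' y) y)
    (hg' : HasDerivAt g' g'' x) :
    driftDiffusion μ v w t x = p' * g x + q' - μ * (p t * g'') + v t x * (p t * g' x) := by
  obtain rfl : w = fun t x => p t * g x + q t := funext₂ hw
  have hderiv : deriv (fun y => p t * g y + q t) = fun y => p t * g' y :=
    funext fun y => (((hg y).const_mul (p t)).add_const (q t)).deriv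
  rw [driftDiffusion, hderiv, (hg'.const_mul (p t)).deriv,
    ((hp.mul_const (g x)).fun_add hq).deriv]

theorem driftDiffusion_nonpos_of_isMinOn (hμ : 0 ≤ μ) (hz : Differentiable ℝ (uncurry z))
    {s y : ℝ} (hmin : IsMinOn (uncurry z) (Icc t₁ t₂ ×ˢ Icc a b) (s, y))
    (hs : s ∈ Ioc t₁ t₂) (hy : y ∈ Ioo a b) : driftDiffusion μ v z s y ≤ 0 := by
  have hmin_t : IsMinOn (fun r => z r y) (Icc t₁ t₂) s := fun r hr =>
    isMinOn_iff.1 hmin (r, y) ⟨hr, Ioo_subset_Icc_self hy⟩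
  have hmin_x : IsLocalMin (z s) y :=
    IsMinOn.isLocalMin (fun y' hy' => isMinOn_iff.1 hmin (s, y') ⟨Ioc_subset_Icc_self hs, hy'⟩)
      (Icc_mem_nhds hy.1 hy.2)
  have hzt : DifferentiableAt ℝ (fun r => z r y) s :=
    hz.comp (differentiable_id.prodMk (differentiable_const y)) s
  have hzx : Continuous (z s) := hz.continuous.comp (continuous_const.prodMk continuous_id)
  have htime : 0 ≤ deriv (fun r => z r y) s * (t₁ - s) :=
    hmin_t.deriv_mul_sub_nonneg (convex_Icc _ _) (Ioc_subset_Icc_self hs)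
      (left_mem_Icc.2 (hs.1.le.trans hs.2)) hzt
  have hxx := hmin_x.deriv_deriv_nonneg hzx.continuousAt
  have hdt : deriv (fun r => z r y) s ≤ 0 := by nlinarith [hs.1]
  simp only [driftDiffusion, hmin_x.deriv_eq_zero, mul_zero, add_zero]
  nlinarith

theorem nonneg_of_driftDiffusion_pos (hμ : 0 ≤ μ) (hz : Differentiable ℝ (uncurry z))
    (hbot : ∀ x ∈ Icc a b, 0 ≤ z t₁ x)
    (hleft : ∀ t ∈ Icc t₁ t₂, 0 ≤ z t a ∨ deriv (z t) a < 0)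
    (hright : ∀ t ∈ Icc t₁ t₂, 0 ≤ z t b)
    (hpos : ∀ t ∈ Icc t₁ t₂, ∀ x ∈ Icc a b, z t x < 0 → 0 < driftDiffusion μ v z t x) :
    ∀ t ∈ Icc t₁ t₂, ∀ x ∈ Icc a b, 0 ≤ z t x := by
  intro t ht x hx
  by_contra! hneg
  obtain ⟨⟨s, y⟩, ⟨hs, hy⟩, hmin⟩ := (isCompact_Icc.prod isCompact_Icc).exists_isMinOn
    ⟨(t, x), ht, hx⟩ hz.continuous.continuousOn
  have hzneg : z s y < 0 := (isMinOn_iff.1 hmin (t, x) ⟨ht, hx⟩).trans_lt hneg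
  have hs' : s ∈ Ioc t₁ t₂ := ⟨hs.1.lt_of_ne (by rintro rfl; linarith [hbot y hy]), hs.2⟩
  have hyb : y < b := hy.2.lt_of_ne (by rintro rfl; linarith [hright s hs])
  have hya : a < y := by
    refine hy.1.lt_of_ne ?_
    rintro rfl
    have hzx : DifferentiableAt ℝ (z s) a :=
      hz.comp ((differentiable_const s).prodMk differentiable_id) a
    have hslope := IsMinOn.deriv_mul_sub_nonneg
      (fun y' hy' => isMinOn_iff.1 hmin (s, y') ⟨hs, hy'⟩) (convex_Icc a b) hy
      (right_mem_Icc.2 hyb.le) hzx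
    rcases hleft s hs with h | h
    · linarith
    · nlinarith
  exact (hpos s hs y hy hzneg).not_ge
    (driftDiffusion_nonpos_of_isMinOn hμ hz hmin hs' ⟨hya, hyb⟩)

theorem le_of_driftDiffusion_neg (hμ : 0 ≤ μ) (hu : ContDiff ℝ 2 (uncurry u))
    (hw : ContDiff ℝ 2 (uncurry w))
    (hu0 : ∀ t ∈ Icc t₁ t₂, ∀ x ∈ Icc a b, 0 ≤ u t x)
    (hpde : ∀ t ∈ Icc t₁ t₂, ∀ x ∈ Icc a b, driftDiffusion μ v u t x = 0)
    (hw_sub : ∀ t ∈ Icc t₁ t₂, ∀ x ∈ Icc a b, 0 < w t x → driftDiffusion μ v w t x < 0)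
    (hbot : ∀ x ∈ Icc a b, w t₁ x ≤ u t₁ x)
    (hleft : ∀ t ∈ Icc t₁ t₂, w t a ≤ u t a ∨ deriv (u t) a < deriv (w t) a)
    (hright : ∀ t ∈ Icc t₁ t₂, w t b ≤ u t b) :
    ∀ t ∈ Icc t₁ t₂, ∀ x ∈ Icc a b, w t x ≤ u t x := by
  have hdiff : ∀ t, deriv (fun x => u t x - w t x) a = deriv (u t) a - deriv (w t) a :=
    fun t => deriv_fun_sub ((hu.curry_right t).differentiable two_ne_zero a)
      ((hw.curry_right t).differentiable two_ne_zero a)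
  have := nonneg_of_driftDiffusion_pos (z := fun t x => u t x - w t x) (v := v) hμ
    ((hu.sub hw).differentiable two_ne_zero) (fun x hx => sub_nonneg.2 (hbot x hx))
    (fun t ht => (hleft t ht).imp sub_nonneg.2 fun h => by rw [hdiff]; linarith)
    (fun t ht => sub_nonneg.2 (hright t ht)) fun t ht x hx hneg => by
      rw [driftDiffusion_sub hu hw, hpde t ht x hx, zero_sub, neg_pos]
      exact hw_sub t ht x hx (by linarith [hu0 t ht x hx])
  exact fun t ht x hx => sub_nonneg.1 (this t ht x hx)

noncomputable def bumpBarrier (c B t₁ x₀ r t x : ℝ) : ℝ :=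
  c * exp (-(B * (t - t₁))) * (r ^ 2 - (x - x₀) ^ 2) ^ 2

theorem contDiff_bumpBarrier (c B t₁ x₀ r : ℝ) :
    ContDiff ℝ 2 (uncurry (bumpBarrier c B t₁ x₀ r)) := by
  unfold bumpBarrier; fun_prop

theorem driftDiffusion_bumpBarrier_neg {c B x₀ r V t x : ℝ} (hμ : 0 < μ) (hr : 0 < r)
    (hc : 0 < c) (hB : (12 * μ + 4 * V * r) ^ 2 ≤ 16 * μ * r ^ 2 * B)
    (hx : x ∈ Icc (x₀ - r) (x₀ + r)) (hv : |v t x| ≤ V) :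
    driftDiffusion μ v (bumpBarrier c B t₁ x₀ r) t x < 0 := by
  have hP : HasDerivAt (fun t => c * exp (-(B * (t - t₁)))) (-B * (c * exp (-(B * (t - t₁))))) t :=
    ((((hasDerivAt_id t).sub_const t₁).const_mul B).fun_neg.exp.const_mul c).congr_deriv
      (by simp; ring)
  have hg : ∀ x, HasDerivAt (fun x => (r ^ 2 - (x - x₀) ^ 2) ^ 2)
      (-4 * (x - x₀) * (r ^ 2 - (x - x₀) ^ 2)) x := fun x =>
    (((((hasDerivAt_id x).sub_const x₀).fun_pow 2).const_sub (r ^ 2)).fun_pow 2).congr_deriv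
      (by simp; ring)
  have hg' : HasDerivAt (fun x => -4 * (x - x₀) * (r ^ 2 - (x - x₀) ^ 2))
      (12 * (x - x₀) ^ 2 - 4 * r ^ 2) x :=
    ((((hasDerivAt_id x).sub_const x₀).const_mul (-4)).fun_mul
      ((((hasDerivAt_id x).sub_const x₀).fun_pow 2).const_sub (r ^ 2))).congr_deriv
      (by simp; ring)
  rw [driftDiffusion_eq_of_separated (w := bumpBarrier c B t₁ x₀ r) (fun t x => (add_zero _).symm)
    hP (hasDerivAt_const t 0) hg hg']
  obtain ⟨s, hs⟩ : ∃ s, s = r ^ 2 - (x - x₀) ^ 2 := ⟨_, rfl⟩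
  rw [← hs]
  have hs0 : 0 ≤ s := by
    rw [hs, sub_nonneg]; exact sq_le_sq' (by linarith [hx.1]) (by linarith [hx.2])
  have hvy : -(V * r) ≤ v t x * (x - x₀) := by
    refine (abs_le.1 ?_).1
    rw [abs_mul]
    exact mul_le_mul hv (abs_sub_le_iff.2 ⟨by linarith [hx.2], by linarith [hx.1]⟩)
      (abs_nonneg _) ((abs_nonneg _).trans hv)
  -- AM-GM, with `B` large enough: `(Ks - 8μr²)² ≤ 16μr² (Bs² - Ks + 4μr²)` for `K = 12μ + 4Vr`.
  have hamgm : 0 ≤ B * s ^ 2 - (12 * μ + 4 * V * r) * s + 4 * μ * r ^ 2 := by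
    refine nonneg_of_mul_nonneg_right (a := 16 * μ * r ^ 2) ?_ (by positivity)
    nlinarith [mul_le_mul_of_nonneg_right hB (sq_nonneg s),
      sq_nonneg ((12 * μ + 4 * V * r) * s - 8 * μ * r ^ 2)]
  have key : 0 < B * s ^ 2 + μ * (12 * (x - x₀) ^ 2 - 4 * r ^ 2) + 4 * (v t x * (x - x₀)) * s := by
    rw [show 12 * (x - x₀) ^ 2 - 4 * r ^ 2 = 8 * r ^ 2 - 12 * s by rw [hs]; ring]
    nlinarith [mul_le_mul_of_nonneg_right hvy hs0, mul_pos hμ (pow_pos hr 2)]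
  nlinarith [mul_pos (by positivity : 0 < c * exp (-(B * (t - t₁)))) key]

noncomputable def frontBarrier (ε l κ t₁ b t x : ℝ) : ℝ :=
  ε * exp (-(l * (b - x))) - ε * exp (-(κ * l * (t - t₁)))

theorem contDiff_frontBarrier (ε l κ t₁ b : ℝ) :
    ContDiff ℝ 2 (uncurry (frontBarrier ε l κ t₁ b)) := by
  unfold frontBarrier; fun_prop

theorem hasDerivAt_exp_neg_mul_sub (l b x : ℝ) :
    HasDerivAt (fun x => exp (-(l * (b - x)))) (l * exp (-(l * (b - x)))) x :=
  (((hasDerivAt_id x).const_sub b).const_mul l).fun_neg.exp.congr_deriv (by simp; ring)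

theorem deriv_frontBarrier (ε l κ t₁ b t x : ℝ) :
    deriv (frontBarrier ε l κ t₁ b t) x = ε * (l * exp (-(l * (b - x)))) :=
  (((hasDerivAt_exp_neg_mul_sub l b x).const_mul ε).sub_const _).deriv

theorem driftDiffusion_frontBarrier_neg {ε l κ V t x : ℝ} (hε : 0 < ε) (hl : 0 < l)
    (hκ : 0 < κ) (hμl : μ * l = V + κ) (hv : v t x ≤ V)
    (hw : 0 < frontBarrier ε l κ t₁ b t x) :
    driftDiffusion μ v (frontBarrier ε l κ t₁ b) t x < 0 := by
  have hq : HasDerivAt (fun t => -(ε * exp (-(κ * l * (t - t₁)))))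
      (κ * l * (ε * exp (-(κ * l * (t - t₁))))) t :=
    ((((hasDerivAt_id t).sub_const t₁).const_mul (κ * l)).fun_neg.exp.const_mul ε).fun_neg
      |>.congr_deriv (by simp; ring)
  rw [driftDiffusion_eq_of_separated (w := frontBarrier ε l κ t₁ b)
    (fun t x => sub_eq_add_neg _ _) (hasDerivAt_const t ε) hq (hasDerivAt_exp_neg_mul_sub l b)
    ((hasDerivAt_exp_neg_mul_sub l b x).const_mul l)]
  unfold frontBarrier at hw
  set D := exp (-(l * (b - x))) with hD
  set F := exp (-(κ * l * (t - t₁)))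
  have hFD : F < D := by nlinarith
  have hneg : κ * (F - D) + (v t x - V) * D < 0 := by
    nlinarith [mul_nonpos_of_nonpos_of_nonneg (sub_nonpos.2 hv) (hD ▸ exp_pos _).le]
  rw [show μ * (ε * (l * (l * D))) = ε * l * D * (μ * l) by ring, hμl]
  nlinarith [mul_neg_of_pos_of_neg (mul_pos hε hl) hneg]

theorem exists_pos_le_center (hμ : 0 < μ) (hu : ContDiff ℝ 2 (uncurry u)) {x₀ r δ V : ℝ}
    (hr : 0 < r) (hδ : 0 < δ)
    (hu0 : ∀ t ∈ Icc t₁ t₂, ∀ x ∈ Icc (x₀ - r) (x₀ + r), 0 ≤ u t x)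
    (hpde : ∀ t ∈ Icc t₁ t₂, ∀ x ∈ Icc (x₀ - r) (x₀ + r), driftDiffusion μ v u t x = 0)
    (hV : ∀ t ∈ Icc t₁ t₂, ∀ x ∈ Icc (x₀ - r) (x₀ + r), |v t x| ≤ V)
    (hinit : ∀ x ∈ Icc (x₀ - r) (x₀ + r), δ ≤ u t₁ x) :
    ∃ ε > 0, ∀ t ∈ Icc t₁ t₂, ε ≤ u t x₀ := by
  obtain ⟨B, hB⟩ : ∃ B, B = (12 * μ + 4 * V * r) ^ 2 / (16 * μ * r ^ 2) := ⟨_, rfl⟩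
  have hB0 : 0 ≤ B := by rw [hB]; positivity
  have hBK : (12 * μ + 4 * V * r) ^ 2 ≤ 16 * μ * r ^ 2 * B := by
    rw [hB, mul_div_cancel₀ _ (by positivity)]
  have hc : 0 < δ / r ^ 4 := by positivity
  have hle := le_of_driftDiffusion_neg (w := bumpBarrier (δ / r ^ 4) B t₁ x₀ r) hμ.le hu
    (contDiff_bumpBarrier _ _ _ _ _) hu0 hpde
    (fun t ht x hx _ => driftDiffusion_bumpBarrier_neg hμ hr hc hBK hx (hV t ht x hx))
    (fun x hx => by
      have hsq : (r ^ 2 - (x - x₀) ^ 2) ^ 2 ≤ (r ^ 2) ^ 2 := pow_le_pow_left₀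
        (sub_nonneg.2 (sq_le_sq' (by linarith [hx.1]) (by linarith [hx.2]))) (by nlinarith) 2
      have hδr : δ / r ^ 4 * (r ^ 2) ^ 2 = δ := by field_simp
      simp only [bumpBarrier, sub_self, mul_zero, neg_zero, exp_zero, mul_one]
      nlinarith [hinit x hx, mul_le_mul_of_nonneg_left hsq hc.le])
    (fun t ht => Or.inl (by simpa [bumpBarrier] using hu0 t ht _ (left_mem_Icc.2 (by linarith))))
    (fun t ht => by simpa [bumpBarrier] using hu0 t ht _ (right_mem_Icc.2 (by linarith)))
  refine ⟨δ * exp (-(B * (t₂ - t₁))), by positivity, fun t ht => ?_⟩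
  have hcenter : bumpBarrier (δ / r ^ 4) B t₁ x₀ r t x₀ = δ * exp (-(B * (t - t₁))) := by
    simp only [bumpBarrier, sub_self]; field_simp; ring
  have hexp : exp (-(B * (t₂ - t₁))) ≤ exp (-(B * (t - t₁))) :=
    exp_le_exp.2 (neg_le_neg (mul_le_mul_of_nonneg_left (by linarith [ht.2]) hB0))
  linarith [hle t ht x₀ ⟨by linarith, by linarith⟩, mul_le_mul_of_nonneg_left hexp hδ.le]

theorem pos_of_neumann_left (hμ : 0 < μ) (hu : ContDiff ℝ 2 (uncurry u)) {ε V : ℝ}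
    (ht : t₁ < t₂) (hab : a < b) (hε : 0 < ε)
    (hu0 : ∀ t ∈ Icc t₁ t₂, ∀ x ∈ Icc a b, 0 ≤ u t x)
    (hpde : ∀ t ∈ Icc t₁ t₂, ∀ x ∈ Icc a b, driftDiffusion μ v u t x = 0)
    (hV : ∀ t ∈ Icc t₁ t₂, ∀ x ∈ Icc a b, |v t x| ≤ V)
    (hneu : ∀ t ∈ Icc t₁ t₂, deriv (u t) a ≤ 0)
    (hline : ∀ t ∈ Icc t₁ t₂, ε ≤ u t b) :
    ∀ x ∈ Icc a b, 0 < u t₂ x := by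
  have hV0 : 0 ≤ V :=
    (abs_nonneg _).trans (hV t₁ (left_mem_Icc.2 ht.le) a (left_mem_Icc.2 hab.le))
  -- `κ (t₂ - t₁) = 2 (b - a)` makes the barrier positive on all of `[a, b]` at time `t₂`.
  obtain ⟨κ, hκ⟩ : ∃ κ, κ = 2 * (b - a) / (t₂ - t₁) := ⟨_, rfl⟩
  obtain ⟨l, hl⟩ : ∃ l, l = (V + κ) / μ := ⟨_, rfl⟩
  have hκ0 : 0 < κ := by rw [hκ]; exact div_pos (by linarith) (by linarith)
  have hl0 : 0 < l := by rw [hl]; positivity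
  have hμl : μ * l = V + κ := by rw [hl]; field_simp
  have hle := le_of_driftDiffusion_neg (w := frontBarrier ε l κ t₁ b) hμ.le hu
    (contDiff_frontBarrier _ _ _ _ _) hu0 hpde
    (fun t ht x hx hw => driftDiffusion_frontBarrier_neg hε hl0 hκ0 hμl
      ((le_abs_self _).trans (hV t ht x hx)) hw)
    (fun x hx => by
      have : exp (-(l * (b - x))) ≤ 1 := exp_le_one_iff.2 (by nlinarith [hx.2])
      simp only [frontBarrier, sub_self, mul_zero, neg_zero, exp_zero, mul_one]
      nlinarith [hu0 t₁ (left_mem_Icc.2 ht.le) x hx])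
    (fun t ht => Or.inr <| by
      rw [deriv_frontBarrier]
      linarith [hneu t ht, mul_pos hε (mul_pos hl0 (exp_pos (-(l * (b - a)))))])
    (fun t ht => by
      simp only [frontBarrier, sub_self, mul_zero, neg_zero, exp_zero, mul_one]
      nlinarith [hline t ht, exp_pos (-(κ * l * (t - t₁)))])
  intro x hx
  refine lt_of_lt_of_le ?_ (hle t₂ (right_mem_Icc.2 ht.le) x hx)
  have hT : κ * l * (t₂ - t₁) = 2 * l * (b - a) := by
    rw [hκ]; field_simp [(sub_pos.2 ht).ne']
  have : exp (-(κ * l * (t₂ - t₁))) < exp (-(l * (b - x))) :=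
    exp_lt_exp.2 (by rw [hT]; nlinarith [hx.1])
  simp only [frontBarrier]
  linarith [mul_lt_mul_of_pos_left this hε]

theorem pos_of_neumann_right (hμ : 0 < μ) (hu : ContDiff ℝ 2 (uncurry u)) {ε V : ℝ}
    (ht : t₁ < t₂) (hab : a < b) (hε : 0 < ε)
    (hu0 : ∀ t ∈ Icc t₁ t₂, ∀ x ∈ Icc a b, 0 ≤ u t x)
    (hpde : ∀ t ∈ Icc t₁ t₂, ∀ x ∈ Icc a b, driftDiffusion μ v u t x = 0)
    (hV : ∀ t ∈ Icc t₁ t₂, ∀ x ∈ Icc a b, |v t x| ≤ V)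
    (hneu : ∀ t ∈ Icc t₁ t₂, 0 ≤ deriv (u t) b)
    (hline : ∀ t ∈ Icc t₁ t₂, ε ≤ u t a) :
    ∀ x ∈ Icc a b, 0 < u t₂ x := by
  have hneg : ∀ x ∈ Icc (-b) (-a), -x ∈ Icc a b := fun x hx =>
    ⟨le_neg_of_le_neg hx.2, neg_le_of_neg_le hx.1⟩
  have := pos_of_neumann_left (u := fun t x => u t (-x)) (v := fun t x => -v t (-x)) hμ
    (hu.comp (contDiff_fst.prodMk contDiff_snd.neg)) ht (neg_lt_neg hab) hε
    (fun t ht x hx => hu0 t ht (-x) (hneg x hx))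
    (fun t ht x hx => by rw [driftDiffusion_comp_neg]; exact hpde t ht (-x) (hneg x hx))
    (fun t ht x hx => by rw [abs_neg]; exact hV t ht (-x) (hneg x hx))
    (fun t ht => by rw [deriv_comp_neg, neg_neg]; linarith [hneu t ht])
    (fun t ht => by simpa using hline t ht)
  intro x hx
  simpa using this (-x) ⟨neg_le_neg hx.2, neg_le_neg hx.1⟩

theorem exists_Icc_subset_Ioo_inter_preimage {f : ℝ → ℝ} (hf : Continuous f) {x c : ℝ}
    (hab : a < b) (hx : x ∈ Icc a b) (hc : c < f x) :
    ∃ y r, 0 < r ∧ Icc (y - r) (y + r) ⊆ Ioo a b ∩ f ⁻¹' Ioi c := by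
  have hU : IsOpen (Ioo a b ∩ f ⁻¹' Ioi c) := isOpen_Ioo.inter (isOpen_Ioi.preimage hf)
  obtain ⟨y, hy⟩ : (Ioo a b ∩ f ⁻¹' Ioi c).Nonempty := by
    rw [← closure_Ioo hab.ne] at hx
    obtain ⟨y, hyc, hyab⟩ := mem_closure_iff_nhds.1 hx _ ((isOpen_Ioi.preimage hf).mem_nhds hc)
    exact ⟨y, hyab, hyc⟩
  obtain ⟨ρ, hρ, hball⟩ := Metric.isOpen_iff.1 hU y hy
  refine ⟨y, ρ / 2, half_pos hρ, ?_⟩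
  rw [← Real.closedBall_eq_Icc]
  exact (Metric.closedBall_subset_ball (half_lt_self hρ)).trans hball

theorem pos_of_driftDiffusion_eq_zero_of_neumann (hμ : 0 < μ) (hu : ContDiff ℝ 2 (uncurry u))
    (hv : ContinuousOn (uncurry v) (Icc t₁ t₂ ×ˢ Icc a b)) (ht : t₁ < t₂) (hab : a < b)
    (hu0 : ∀ t ∈ Icc t₁ t₂, ∀ x ∈ Icc a b, 0 ≤ u t x)
    (hpde : ∀ t ∈ Icc t₁ t₂, ∀ x ∈ Icc a b, driftDiffusion μ v u t x = 0)
    (hneu : ∀ t ∈ Icc t₁ t₂, deriv (u t) a = 0 ∧ deriv (u t) b = 0)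
    {x₁ : ℝ} (hx₁ : x₁ ∈ Icc a b) (hpos : 0 < u t₁ x₁) :
    ∀ x ∈ Icc a b, 0 < u t₂ x := by
  obtain ⟨V, hV⟩ := (isCompact_Icc.prod isCompact_Icc).exists_bound_of_continuousOn hv
  replace hV : ∀ t ∈ Icc t₁ t₂, ∀ x ∈ Icc a b, |v t x| ≤ V :=
    fun t ht x hx => hV (t, x) ⟨ht, hx⟩
  obtain ⟨x₀, r, hr, hsub⟩ := exists_Icc_subset_Ioo_inter_preimage
    (hu.curry_right t₁).continuous hab hx₁ (half_lt_self hpos)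
  have hx₀ : x₀ ∈ Ioo a b := (hsub ⟨by linarith, by linarith⟩).1
  have hIcc : Icc (x₀ - r) (x₀ + r) ⊆ Icc a b := fun x hx => Ioo_subset_Icc_self (hsub hx).1
  obtain ⟨ε, hε, hline⟩ := exists_pos_le_center hμ hu hr (half_pos hpos)
    (fun t ht x hx => hu0 t ht x (hIcc hx)) (fun t ht x hx => hpde t ht x (hIcc hx))
    (fun t ht x hx => hV t ht x (hIcc hx)) (fun x hx => (hsub hx).2.le)
  have hleft : Icc a x₀ ⊆ Icc a b := Icc_subset_Icc_right hx₀.2.le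
  have hright : Icc x₀ b ⊆ Icc a b := Icc_subset_Icc_left hx₀.1.le
  intro x hx
  rcases le_total x x₀ with h | h
  · exact pos_of_neumann_left hμ hu ht hx₀.1 hε (fun t ht x hx => hu0 t ht x (hleft hx))
      (fun t ht x hx => hpde t ht x (hleft hx)) (fun t ht x hx => hV t ht x (hleft hx))
      (fun t ht => (hneu t ht).1.le) hline x ⟨hx.1, h⟩
  · exact pos_of_neumann_right hμ hu ht hx₀.2 hε (fun t ht x hx => hu0 t ht x (hright hx))
      (fun t ht x hx => hpde t ht x (hright hx)) (fun t ht x hx => hV t ht x (hright hx))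
      (fun t ht => (hneu t ht).2.ge) hline x ⟨h, hx.2⟩

end DriftDiffusion

theorem exists_forall_le_of_periodic {φ : ℝ → ℝ → ℝ} (hφ : Continuous (uncurry φ))
    {p : ℝ} (hp : 0 < p) (hper : ∀ t x, φ (t + p) x = φ t x) {s : Set ℝ} (hs : IsCompact s)
    (hne : s.Nonempty) : ∃ t₀, ∃ x₀ ∈ s, ∀ t, ∀ x ∈ s, φ t₀ x₀ ≤ φ t x := by
  obtain ⟨⟨t₀, x₀⟩, ⟨-, hx₀⟩, hmin⟩ := (isCompact_Icc.prod hs).exists_isMinOn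
    ⟨(0, hne.some), left_mem_Icc.2 hp.le, hne.some_mem⟩ hφ.continuousOn
  refine ⟨t₀, x₀, hx₀, fun t x hx => ?_⟩
  obtain ⟨t', ht', heq⟩ :=
    Function.Periodic.exists_mem_Ico₀ (f := (φ · x)) (fun t => hper t x) hp t
  rw [heq]
  exact isMinOn_iff.1 hmin (t', x) ⟨Ico_subset_Icc_self ht', hx⟩

theorem drift_diffusion_positive_solution_constant_general (μ : ℝ) (hμ : 0 < μ)
    (v : ℝ → ℝ → ℝ) (hv : ContDiff ℝ (⊤ : ℕ∞) (Function.uncurry v))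
    (φ : ℝ → ℝ → ℝ) (hφ : ContDiff ℝ (⊤ : ℕ∞) (Function.uncurry φ))
    (hφper : ∀ t x : ℝ, φ (t + 1) x = φ t x)
    (hneu : ∀ t : ℝ, deriv (φ t) 0 = 0 ∧ deriv (φ t) 1 = 0)
    (hpde : ∀ t : ℝ, ∀ x ∈ Set.Icc (0:ℝ) 1,
      deriv (fun s => φ s x) t - μ * deriv (deriv (φ t)) x
        + v t x * deriv (φ t) x = 0) :
    ∀ t : ℝ, ∀ x ∈ Set.Icc (0:ℝ) 1, φ t x = φ 0 0 := by
  obtain ⟨t₀, x₀, hx₀, hmin⟩ := exists_forall_le_of_periodic hφ.continuous one_pos hφper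
    isCompact_Icc (nonempty_Icc.2 zero_le_one)
  suffices h : ∀ t, ∀ x ∈ Icc (0 : ℝ) 1, φ t x = φ t₀ x₀ from
    fun t x hx => (h t x hx).trans (h 0 0 (left_mem_Icc.2 zero_le_one)).symm
  intro t x hx
  refine le_antisymm (not_lt.1 fun hlt => ?_) (hmin t x hx)
  obtain ⟨n, hn⟩ := exists_int_gt (t - t₀)
  have hrec : φ (t₀ + n) x₀ = φ t₀ x₀ := by
    simpa using Function.Periodic.int_mul (f := (φ · x₀)) (fun t => hφper t x₀) n t₀
  have hpos := pos_of_driftDiffusion_eq_zero_of_neumann (u := fun t x => φ t x - φ t₀ x₀) hμ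
    ((hφ.of_le (WithTop.coe_le_coe.2 le_top)).sub contDiff_const) hv.continuous.continuousOn
    (by linarith : t < t₀ + n) zero_lt_one (fun s _ y hy => sub_nonneg.2 (hmin s y hy))
    (fun s _ y hy => by rw [driftDiffusion_sub_const]; exact hpde s y hy)
    (fun s _ => by simpa [deriv_sub_const] using hneu s) hx (sub_pos.2 hlt) x₀ hx₀
  linarith

/-- Proposition 6.10: up to a positive multiplicative constant, the constant function `1` is the
only strictly positive, smooth, time-periodic solution with homogeneous Neumann boundary
conditions of the drift-diffusion equation `φ_t − μ φ_xx + v φ_x = 0` on `ℝ × [0,1]`;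
i.e. any such `φ` is constant on `ℝ × [0,1]`. -/
theorem drift_diffusion_positive_solution_constant (μ : ℝ) (hμ : 0 < μ)
    (v : ℝ → ℝ → ℝ) (hv : ContDiff ℝ (⊤ : ℕ∞) (Function.uncurry v))
    (hvper : ∀ t x : ℝ, v (t + 1) x = v t x)
    (hvbc : ∀ t : ℝ, v t 0 = 0 ∧ v t 1 = 0)
    (φ : ℝ → ℝ → ℝ) (hφ : ContDiff ℝ (⊤ : ℕ∞) (Function.uncurry φ))
    (hφper : ∀ t x : ℝ, φ (t + 1) x = φ t x)
    (hφpos : ∀ t x : ℝ, 0 < φ t x)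
    (hneu : ∀ t : ℝ, deriv (φ t) 0 = 0 ∧ deriv (φ t) 1 = 0)
    (hpde : ∀ t : ℝ, ∀ x ∈ Set.Icc (0:ℝ) 1,
      deriv (fun s => φ s x) t - μ * deriv (deriv (φ t)) x
        + v t x * deriv (φ t) x = 0) :
    ∀ t : ℝ, ∀ x ∈ Set.Icc (0:ℝ) 1, φ t x = φ 0 0 :=
  drift_diffusion_positive_solution_constant_general μ hμ v hv φ hφ hφper hneu hpde
end
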